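/- arXiv:2412.16396 — 2 statements merged into one kernel-verified Lean document; each statement's English description precedes it below -/
import Mathlib

section
/- KYP implies passivity: if Q : 𝕋 → ℂ^{n×n} is pointwise Hermitian positive semidefinite, locally absolutely continuous with a.e. derivative Q̇ ∈ L¹_loc, and satisfies the KYP inequality, then V_Q(t,x) = ½ x* Q(t) x is a storage function for the LTV system; in particular the system is passive. -/
open MeasureTheory Matrix Set
open scoped ENNReal ComplexOrder

noncomputable section

attribute [local instance] Matrix.normedAddCommGroup Matrix.normedSpace

variable {n m : ℕ}

/-- `f` is locally `Lᵖ` on the interval `T`: it is `ℒᵖ` on every compact subinterval. -/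
def LocLp {E : Type*} [NormedAddCommGroup E] (T : Set ℝ) (p : ℝ≥0∞) (f : ℝ → E) : Prop :=
  ∀ a ∈ T, ∀ b ∈ T, MemLp f p (volume.restrict (Icc a b))

/-- The coefficient regularity assumptions of an LTV system:
`A ∈ L¹_loc`, `B ∈ L²_loc`, `C ∈ L²_loc`, `D ∈ L^∞_loc`. -/
def IsLTV (T : Set ℝ) (A : ℝ → Matrix (Fin n) (Fin n) ℂ) (B : ℝ → Matrix (Fin n) (Fin m) ℂ)
    (C : ℝ → Matrix (Fin m) (Fin n) ℂ) (D : ℝ → Matrix (Fin m) (Fin m) ℂ) : Prop :=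
  LocLp T 1 A ∧ LocLp T 2 B ∧ LocLp T 2 C ∧ LocLp T ⊤ D

/-- A state-input-output solution of the LTV system on `T` (Carathéodory sense). -/
def IsSolution (T : Set ℝ) (A : ℝ → Matrix (Fin n) (Fin n) ℂ) (B : ℝ → Matrix (Fin n) (Fin m) ℂ)
    (C : ℝ → Matrix (Fin m) (Fin n) ℂ) (D : ℝ → Matrix (Fin m) (Fin m) ℂ)
    (x : ℝ → Fin n → ℂ) (u y : ℝ → Fin m → ℂ) : Prop :=
  LocLp T 2 u ∧ LocLp T 2 y ∧
  (∀ a ∈ T, ∀ b ∈ T, IntegrableOn (fun r => A r *ᵥ x r + B r *ᵥ u r) (Icc a b)) ∧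
  (∀ s ∈ T, ∀ t ∈ T, x t - x s = ∫ r in s..t, (A r *ᵥ x r + B r *ᵥ u r)) ∧
  (∀ᵐ t ∂(volume : Measure ℝ), t ∈ T → y t = C t *ᵥ x t + D t *ᵥ u t)

/-- A storage function for the LTV system on `T`: nonnegative, vanishing at `x = 0`,
and satisfying the dissipation inequality along all state-input-output solutions. -/
def IsStorage (T : Set ℝ) (A : ℝ → Matrix (Fin n) (Fin n) ℂ) (B : ℝ → Matrix (Fin n) (Fin m) ℂ)
    (C : ℝ → Matrix (Fin m) (Fin n) ℂ) (D : ℝ → Matrix (Fin m) (Fin m) ℂ)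
    (V : ℝ → (Fin n → ℂ) → ℝ) : Prop :=
  (∀ t ∈ T, ∀ x : Fin n → ℂ, 0 ≤ V t x) ∧
  (∀ t ∈ T, V t 0 = 0) ∧
  (∀ x u y, IsSolution T A B C D x u y →
    ∀ t₀ ∈ T, ∀ t₁ ∈ T, t₀ ≤ t₁ →
      V t₁ (x t₁) - V t₀ (x t₀) ≤ ∫ t in t₀..t₁, (star (y t) ⬝ᵥ u t).re)

/-!
Along a solution, the product rule for indefinite integrals (valid for any continuous bilinear
pairing, and proved by Fubini on a triangle) shows that `t ↦ x(t)ᴴ Q(t) x(t)` is the indefinite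
integral of `ẋᴴ Q x + xᴴ Q̇ x + xᴴ Q ẋ`. Evaluating the KYP form at `(x(t), u(t))` shows that this
rate is at most `2 Re (y(t)ᴴ u(t))` almost everywhere; integrating gives the dissipation inequality.
-/

section Primitive

variable {E F G : Type*} [NormedAddCommGroup E] [NormedSpace ℝ E]
  [NormedAddCommGroup F] [NormedSpace ℝ F] [NormedAddCommGroup G] [NormedSpace ℝ G]

theorem MeasureTheory.IntegrableOn.bilin_continuousOn (L : E →L[ℝ] F →L[ℝ] G) {K : Set ℝ}
    (hK : IsCompact K) {φ : ℝ → E} {Ψ : ℝ → F} (hφ : IntegrableOn φ K) (hΨ : ContinuousOn Ψ K) :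
    IntegrableOn (fun r => L (φ r) (Ψ r)) K := by
  obtain ⟨C, hC⟩ := hK.exists_bound_of_continuousOn hΨ
  exact L.integrable_of_bilin_of_bdd_right C hφ (hΨ.aestronglyMeasurable hK.measurableSet)
    (ae_restrict_of_forall_mem hK.measurableSet hC)

theorem MeasureTheory.IntegrableOn.continuousOn_bilin (L : E →L[ℝ] F →L[ℝ] G) {K : Set ℝ}
    (hK : IsCompact K) {Φ : ℝ → E} {ψ : ℝ → F} (hΦ : ContinuousOn Φ K) (hψ : IntegrableOn ψ K) :
    IntegrableOn (fun r => L (Φ r) (ψ r)) K :=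
  hψ.bilin_continuousOn L.flip hK hΦ

def IsPrimitiveOn (Φ φ : ℝ → E) (a b : ℝ) : Prop :=
  IntegrableOn φ (Icc a b) ∧ ∀ r ∈ Icc a b, Φ r - Φ a = ∫ v in a..r, φ v

namespace IsPrimitiveOn

variable {Φ φ : ℝ → E} {Ψ ψ : ℝ → F} {a b : ℝ}

theorem intervalIntegrable (h : IsPrimitiveOn Φ φ a b) {r : ℝ} (hr : r ∈ Icc a b) :
    IntervalIntegrable φ volume a r :=
  (intervalIntegrable_iff_integrableOn_Ioc_of_le hr.1).2
    (h.1.mono_set (Ioc_subset_Icc_self.trans (Icc_subset_Icc_right hr.2)))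

theorem mono_right (h : IsPrimitiveOn Φ φ a b) {c : ℝ} (hc : c ∈ Icc a b) :
    IsPrimitiveOn Φ φ a c :=
  ⟨h.1.mono_set (Icc_subset_Icc_right hc.2), fun r hr => h.2 r ⟨hr.1, hr.2.trans hc.2⟩⟩

theorem sub_eq_setIntegral (h : IsPrimitiveOn Φ φ a b) {r : ℝ} (hr : r ∈ Icc a b) :
    Φ r - Φ a = ∫ v in Ioc a r, φ v := by
  rw [h.2 r hr, intervalIntegral.integral_of_le hr.1]

theorem continuousOn (h : IsPrimitiveOn Φ φ a b) : ContinuousOn Φ (Icc a b) := by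
  have hprim : ContinuousOn (fun r => Φ a + ∫ v in Ioc a r, φ v) (Icc a b) :=
    continuousOn_const.add (intervalIntegral.continuousOn_primitive h.1)
  exact hprim.congr fun r hr => by simp only [← h.sub_eq_setIntegral hr, add_sub_cancel]

end IsPrimitiveOn

variable [CompleteSpace E] [CompleteSpace F] [CompleteSpace G]

/-- Fubini on the triangle `s < v ≤ r ≤ t`. -/
theorem setIntegral_bilin_primitive_eq (L : E →L[ℝ] F →L[ℝ] G) {s t : ℝ} {f : ℝ → E} {g : ℝ → F}
    (hf : IntegrableOn f (Ioc s t)) (hg : IntegrableOn g (Ioc s t)) :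
    ∫ r in Ioc s t, L (∫ v in Ioc s r, f v) (g r) =
      ∫ v in Ioc s t, L (f v) (∫ r in Icc v t, g r) := by
  set μ := volume.restrict (Ioc s t)
  set k : ℝ × ℝ → G := {p | p.2 ≤ p.1}.indicator fun p => L (f p.2) (g p.1)
  have hk : Integrable k (μ.prod μ) :=
    (hg.op_fst_snd (op := fun b a => L a b) (by fun_prop)
      ⟨‖L‖, fun b a => by simpa [mul_right_comm] using L.le_opNorm₂ a b⟩ hf).indicator
      (measurableSet_le measurable_snd measurable_fst)
  calc ∫ r in Ioc s t, L (∫ v in Ioc s r, f v) (g r)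
      = ∫ r in Ioc s t, ∫ v in Ioc s t, k (r, v) := by
        refine setIntegral_congr_fun measurableSet_Ioc fun r hr => ?_
        have hIic : Iic r ∩ Ioc s t = Ioc s r := by
          ext z; simp only [mem_inter_iff, mem_Iic, mem_Ioc]
          exact ⟨fun h => ⟨h.2.1, h.1⟩, fun h => ⟨h.2, h.1, h.2.trans hr.2⟩⟩
        rw [← hIic, ← Measure.restrict_restrict measurableSet_Iic,
          ← integral_indicator measurableSet_Iic, ← L.flip_apply, ← (L.flip (g r)).integral_comp_comm (hf.indicator measurableSet_Iic)]
        exact integral_congr_ae (ae_of_all _ fun v => by by_cases h : v ≤ r <;> simp [k, h])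
    _ = ∫ v in Ioc s t, ∫ r in Ioc s t, k (r, v) := integral_integral_swap hk
    _ = ∫ v in Ioc s t, L (f v) (∫ r in Icc v t, g r) := by
        refine setIntegral_congr_fun measurableSet_Ioc fun v hv => ?_
        have hIci : Ici v ∩ Ioc s t = Icc v t := by
          ext z; simp only [mem_inter_iff, mem_Ici, mem_Ioc, mem_Icc]
          exact ⟨fun h => ⟨h.1, h.2.2⟩, fun h => ⟨h.1, hv.1.trans_le h.1, h.2⟩⟩
        rw [← hIci, ← Measure.restrict_restrict measurableSet_Ici,
          ← integral_indicator measurableSet_Ici, ← (L (f v)).integral_comp_comm (hg.indicator measurableSet_Ici)]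
        exact integral_congr_ae (ae_of_all _ fun r => by by_cases h : v ≤ r <;> simp [k, h])

namespace IsPrimitiveOn

variable {Φ φ : ℝ → E} {Ψ ψ : ℝ → F} {a b : ℝ}

theorem bilin_sub (L : E →L[ℝ] F →L[ℝ] G) (hΦ : IsPrimitiveOn Φ φ a b)
    (hΨ : IsPrimitiveOn Ψ ψ a b) (hab : a ≤ b) :
    L (Φ b) (Ψ b) - L (Φ a) (Ψ a) = ∫ v in a..b, (L (φ v) (Ψ v) + L (Φ v) (ψ v)) := by
  have hb : b ∈ Icc a b := right_mem_Icc.2 hab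
  have hφ : IntegrableOn φ (Ioc a b) := hΦ.1.mono_set Ioc_subset_Icc_self
  have hψ : IntegrableOn ψ (Ioc a b) := hΨ.1.mono_set Ioc_subset_Icc_self
  have hφΨ : IntegrableOn (fun v => L (φ v) (Ψ v)) (Ioc a b) :=
    (hΦ.1.bilin_continuousOn L isCompact_Icc hΨ.continuousOn).mono_set Ioc_subset_Icc_self
  have hΦψ : IntegrableOn (fun v => L (Φ v) (ψ v)) (Ioc a b) :=
    (hΨ.1.continuousOn_bilin L isCompact_Icc hΦ.continuousOn).mono_set Ioc_subset_Icc_self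
  have hΨ_tail : ∀ v ∈ Ioc a b, ∫ r in Icc v b, ψ r = Ψ b - Ψ v := by
    intro v hv
    have hv' : v ∈ Icc a b := Ioc_subset_Icc_self hv
    rw [integral_Icc_eq_integral_Ioc, ← intervalIntegral.integral_of_le hv.2,
      ← intervalIntegral.integral_interval_sub_left (hΨ.intervalIntegrable hb)
        (hΨ.intervalIntegrable hv'), ← hΨ.2 b hb, ← hΨ.2 v hv']
    abel
  have fubini := setIntegral_bilin_primitive_eq L hφ hψ
  rw [setIntegral_congr_fun measurableSet_Ioc fun r hr =>
      congrArg (L · (ψ r)) (hΦ.sub_eq_setIntegral (Ioc_subset_Icc_self hr)).symm,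
    setIntegral_congr_fun measurableSet_Ioc fun v hv => congrArg (L (φ v)) (hΨ_tail v hv)]
    at fubini
  have hleft : ∫ v in Ioc a b, L (Φ a) (ψ v) = L (Φ a) (Ψ b - Ψ a) := by
    rw [(L (Φ a)).integral_comp_comm hψ, hΨ.sub_eq_setIntegral hb]
  have hright : ∫ v in Ioc a b, L (φ v) (Ψ b) = L (Φ b - Φ a) (Ψ b) := by
    rw [hΦ.sub_eq_setIntegral hb]
    exact (L.flip (Ψ b)).integral_comp_comm hφ
  simp only [map_sub, _root_.sub_apply] at fubini
  rw [integral_sub hΦψ ((L (Φ a)).integrable_comp hψ),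
    integral_sub (f := fun v => L (φ v) (Ψ b)) ((L.flip (Ψ b)).integrable_comp hφ) hφΨ,
    hleft, hright] at fubini
  rw [intervalIntegral.integral_of_le hab, integral_add hφΨ hΦψ]
  simp only [map_sub, _root_.sub_apply] at fubini
  rw [← sub_eq_zero] at fubini
  rw [← sub_eq_zero, ← neg_eq_zero, ← fubini]
  abel

theorem bilin (L : E →L[ℝ] F →L[ℝ] G) (hΦ : IsPrimitiveOn Φ φ a b)
    (hΨ : IsPrimitiveOn Ψ ψ a b) :
    IsPrimitiveOn (fun r => L (Φ r) (Ψ r)) (fun r => L (φ r) (Ψ r) + L (Φ r) (ψ r)) a b :=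
  ⟨(hΦ.1.bilin_continuousOn L isCompact_Icc hΨ.continuousOn).add
      (hΨ.1.continuousOn_bilin L isCompact_Icc hΦ.continuousOn),
    fun _ hr => bilin_sub L (hΦ.mono_right hr) (hΨ.mono_right hr) hr.1⟩

end IsPrimitiveOn

end Primitive

def LinearMap.toContinuousBilin {𝕜 E F G : Type*} [NontriviallyNormedField 𝕜] [CompleteSpace 𝕜]
    [NormedAddCommGroup E] [NormedSpace 𝕜 E] [FiniteDimensional 𝕜 E]
    [NormedAddCommGroup F] [NormedSpace 𝕜 F] [FiniteDimensional 𝕜 F]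
    [NormedAddCommGroup G] [NormedSpace 𝕜 G] (B : E →ₗ[𝕜] F →ₗ[𝕜] G) : E →L[𝕜] F →L[𝕜] G :=
  LinearMap.toContinuousLinearMap (LinearMap.toContinuousLinearMap.toLinearMap ∘ₗ B)

section QuadraticForm

variable {ι κ : Type*} [Fintype ι] [Fintype κ]

def Matrix.mulVecCLM : Matrix ι κ ℂ →L[ℝ] (κ → ℂ) →L[ℝ] (ι → ℂ) :=
  (Matrix.mulVecBilin ℝ ℝ).toContinuousBilin

def reDotProductStar : (ι → ℂ) →L[ℝ] (ι → ℂ) →L[ℝ] ℝ :=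
  LinearMap.toContinuousBilin <| LinearMap.mk₂ ℝ (fun v w => (star v ⬝ᵥ w).re)
    (fun v v' w => by simp [star_add, add_dotProduct])
    (fun c v w => by simp [star_smul, smul_dotProduct])
    (fun v w w' => by simp [dotProduct_add])
    (fun c v w => by simp [dotProduct_smul])

theorem star_dotProduct_conjTranspose_mulVec {R : Type*} [NonUnitalSemiring R] [StarRing R]
    (M : Matrix κ ι R) (w : ι → R) (v : κ → R) : star w ⬝ᵥ (Mᴴ *ᵥ v) = star (M *ᵥ w) ⬝ᵥ v := by
  rw [star_mulVec, dotProduct_mulVec]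

theorem re_star_dotProduct_comm (v w : ι → ℂ) : (star v ⬝ᵥ w).re = (star w ⬝ᵥ v).re := by
  rw [star_dotProduct, Complex.star_def, Complex.conj_re]

theorem storageRate_le_supplyRate_of_KYP {A : Matrix ι ι ℂ} {B : Matrix ι κ ℂ}
    {C : Matrix κ ι ℂ} {D : Matrix κ κ ℂ} {Q Q' : Matrix ι ι ℂ}
    (hKYP : (fromBlocks (-(Aᴴ * Q) - Q * A - Q') (Cᴴ - Q * B) (C - Bᴴ * Q) (D + Dᴴ)).PosSemidef)
    (x : ι → ℂ) (u : κ → ℂ) :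
    (star (A *ᵥ x + B *ᵥ u) ⬝ᵥ (Q *ᵥ x)).re + (star x ⬝ᵥ (Q' *ᵥ x + Q *ᵥ (A *ᵥ x + B *ᵥ u))).re
      ≤ 2 * (star (C *ᵥ x + D *ᵥ u) ⬝ᵥ u).re := by
  -- the KYP form at `(x, u)` equals `2 Re ((C x + D u)ᴴ u)` minus the left-hand side
  have hM := (Complex.nonneg_iff.1 (hKYP.dotProduct_mulVec_nonneg (Sum.elim x u))).1
  have hstar : star (Sum.elim x u) = Sum.elim (star x) (star u) := by
    funext i; cases i <;> rfl
  rw [hstar, fromBlocks_mulVec, sumElim_dotProduct_sumElim, Sum.elim_comp_inl,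
    Sum.elim_comp_inr] at hM
  simp only [Matrix.sub_mulVec, Matrix.add_mulVec, Matrix.neg_mulVec, ← Matrix.mulVec_mulVec,
    dotProduct_add, dotProduct_sub, dotProduct_neg, star_add, add_dotProduct, Matrix.mulVec_add,
    star_dotProduct_conjTranspose_mulVec, Complex.add_re, Complex.sub_re, Complex.neg_re] at hM ⊢
  rw [re_star_dotProduct_comm u (C *ᵥ x), re_star_dotProduct_comm u (D *ᵥ u)] at hM
  linarith

theorem IsPrimitiveOn.re_star_dotProduct_mulVec {x f : ℝ → ι → ℂ}
    {Q Q' : ℝ → Matrix ι ι ℂ} {a b : ℝ} (hx : IsPrimitiveOn x f a b)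
    (hQ : IsPrimitiveOn Q Q' a b) :
    IsPrimitiveOn (fun r => (star (x r) ⬝ᵥ (Q r *ᵥ x r)).re)
      (fun r => (star (f r) ⬝ᵥ (Q r *ᵥ x r)).re + (star (x r) ⬝ᵥ (Q' r *ᵥ x r + Q r *ᵥ f r)).re)
      a b :=
  hx.bilin reDotProductStar (hQ.bilin Matrix.mulVecCLM hx)

end QuadraticForm

theorem IsSolution.storage_sub_le_of_KYP {T : Set ℝ} (hT : T.OrdConnected)
    {A : ℝ → Matrix (Fin n) (Fin n) ℂ} {B : ℝ → Matrix (Fin n) (Fin m) ℂ}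
    {C : ℝ → Matrix (Fin m) (Fin n) ℂ} {D : ℝ → Matrix (Fin m) (Fin m) ℂ}
    {Q Q' : ℝ → Matrix (Fin n) (Fin n) ℂ} (hQ' : LocLp T 1 Q')
    (hQac : ∀ s ∈ T, ∀ t ∈ T, Q t - Q s = ∫ r in s..t, Q' r)
    (hKYP : ∀ᵐ t ∂(volume : Measure ℝ), t ∈ T →
      (fromBlocks (-((A t)ᴴ * Q t) - Q t * A t - Q' t) ((C t)ᴴ - Q t * B t)
        (C t - (B t)ᴴ * Q t) (D t + (D t)ᴴ)).PosSemidef)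
    {x : ℝ → Fin n → ℂ} {u y : ℝ → Fin m → ℂ} (hsol : IsSolution T A B C D x u y)
    {t₀ t₁ : ℝ} (ht₀ : t₀ ∈ T) (ht₁ : t₁ ∈ T) (h01 : t₀ ≤ t₁) :
    (1 / 2 : ℝ) * (star (x t₁) ⬝ᵥ (Q t₁ *ᵥ x t₁)).re
        - (1 / 2 : ℝ) * (star (x t₀) ⬝ᵥ (Q t₀ *ᵥ x t₀)).re
      ≤ ∫ t in t₀..t₁, (star (y t) ⬝ᵥ u t).re := by
  obtain ⟨hu, hy, hf, hx, hout⟩ := hsol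
  have hIcc : Icc t₀ t₁ ⊆ T := hT.out ht₀ ht₁
  have hxp : IsPrimitiveOn x (fun r => A r *ᵥ x r + B r *ᵥ u r) t₀ t₁ :=
    ⟨hf t₀ ht₀ t₁ ht₁, fun r hr => hx t₀ ht₀ r (hIcc hr)⟩
  have hQp : IsPrimitiveOn Q Q' t₀ t₁ :=
    ⟨memLp_one_iff_integrable.1 (hQ' t₀ ht₀ t₁ ht₁), fun r hr => hQac t₀ ht₀ r (hIcc hr)⟩
  have hV := hxp.re_star_dotProduct_mulVec hQp
  have hsupply : IntegrableOn (fun r => (star (y r) ⬝ᵥ u r).re) (Icc t₀ t₁) := by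
    have : ENNReal.HolderTriple 2 2 1 := ⟨by rw [ENNReal.inv_two_add_inv_two, inv_one]⟩
    exact memLp_one_iff_integrable.1
      (reDotProductStar.memLp_of_bilin 1 (hy t₀ ht₀ t₁ ht₁) (hu t₀ ht₀ t₁ ht₁))
  have hle : ∀ᵐ r ∂volume.restrict (Icc t₀ t₁),
      (1 / 2 : ℝ) * ((star (A r *ᵥ x r + B r *ᵥ u r) ⬝ᵥ (Q r *ᵥ x r)).re
        + (star (x r) ⬝ᵥ (Q' r *ᵥ x r + Q r *ᵥ (A r *ᵥ x r + B r *ᵥ u r))).re)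
      ≤ (star (y r) ⬝ᵥ u r).re := by
    filter_upwards [ae_restrict_of_ae hKYP, ae_restrict_of_ae hout,
      ae_restrict_mem measurableSet_Icc] with r hKYPr hyr hr
    rw [hyr (hIcc hr)]
    linarith [storageRate_le_supplyRate_of_KYP (hKYPr (hIcc hr)) (x r) (u r)]
  have ht₁ : t₁ ∈ Icc t₀ t₁ := right_mem_Icc.2 h01
  calc _ = (1 / 2 : ℝ) * ∫ r in t₀..t₁, ((star (A r *ᵥ x r + B r *ᵥ u r) ⬝ᵥ (Q r *ᵥ x r)).re
        + (star (x r) ⬝ᵥ (Q' r *ᵥ x r + Q r *ᵥ (A r *ᵥ x r + B r *ᵥ u r))).re) := by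
        rw [← mul_sub, hV.2 t₁ ht₁]
    _ ≤ ∫ t in t₀..t₁, (star (y t) ⬝ᵥ u t).re := by
        rw [← intervalIntegral.integral_const_mul]
        exact intervalIntegral.integral_mono_ae_restrict h01
          ((hV.intervalIntegrable ht₁).const_mul _)
          (hsupply.mono_set (uIcc_subset_Icc (left_mem_Icc.2 h01) ht₁)).intervalIntegrable hle

theorem KYP_implies_passive_general
    (T : Set ℝ) (hTconn : T.OrdConnected)
    (A : ℝ → Matrix (Fin n) (Fin n) ℂ) (B : ℝ → Matrix (Fin n) (Fin m) ℂ)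
    (C : ℝ → Matrix (Fin m) (Fin n) ℂ) (D : ℝ → Matrix (Fin m) (Fin m) ℂ)
    (Q Q' : ℝ → Matrix (Fin n) (Fin n) ℂ)
    (hQpsd : ∀ t ∈ T, (Q t).PosSemidef)
    (hQ' : LocLp T 1 Q')
    (hQac : ∀ s ∈ T, ∀ t ∈ T, Q t - Q s = ∫ r in s..t, Q' r)
    (hKYP : ∀ᵐ t ∂(volume : Measure ℝ), t ∈ T →
      (Matrix.fromBlocks
        (-((A t)ᴴ * Q t) - Q t * A t - Q' t) ((C t)ᴴ - Q t * B t)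
        (C t - (B t)ᴴ * Q t) (D t + (D t)ᴴ)).PosSemidef) :
    IsStorage T A B C D (fun t x => (1 / 2 : ℝ) * (star x ⬝ᵥ (Q t *ᵥ x)).re) ∧
    ∃ V : ℝ → (Fin n → ℂ) → ℝ, IsStorage T A B C D V := by
  have hV : IsStorage T A B C D (fun t x => (1 / 2 : ℝ) * (star x ⬝ᵥ (Q t *ᵥ x)).re) := by
    refine ⟨fun t ht x => ?_, fun t _ => by simp, fun x u y hsol t₀ ht₀ t₁ ht₁ h01 =>
      hsol.storage_sub_le_of_KYP hTconn hQ' hQac hKYP ht₀ ht₁ h01⟩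
    have := (Complex.nonneg_iff.1 ((hQpsd t ht).dotProduct_mulVec_nonneg x)).1
    positivity
  exact ⟨hV, _, hV⟩

/-- **KYP implies passivity.** If `Q` is pointwise Hermitian positive semidefinite,
locally absolutely continuous with a.e. derivative `Q' ∈ L¹_loc`, and satisfies the
KYP inequality, then `V_Q(t,x) = ½ xᴴ Q(t) x` is a storage function for the LTV system;
in particular the system is passive. -/
theorem KYP_implies_passive
    (T : Set ℝ) (hTopen : IsOpen T) (hTconn : T.OrdConnected)
    (A : ℝ → Matrix (Fin n) (Fin n) ℂ) (B : ℝ → Matrix (Fin n) (Fin m) ℂ)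
    (C : ℝ → Matrix (Fin m) (Fin n) ℂ) (D : ℝ → Matrix (Fin m) (Fin m) ℂ)
    (hLTV : IsLTV T A B C D)
    (Q Q' : ℝ → Matrix (Fin n) (Fin n) ℂ)
    (hQpsd : ∀ t ∈ T, (Q t).PosSemidef)
    (hQ' : LocLp T 1 Q')
    (hQac : ∀ s ∈ T, ∀ t ∈ T, Q t - Q s = ∫ r in s..t, Q' r)
    (hKYP : ∀ᵐ t ∂(volume : Measure ℝ), t ∈ T →
      (Matrix.fromBlocks
        (-((A t)ᴴ * Q t) - Q t * A t - Q' t) ((C t)ᴴ - Q t * B t)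
        (C t - (B t)ᴴ * Q t) (D t + (D t)ᴴ)).PosSemidef) :
    IsStorage T A B C D (fun t x => (1 / 2 : ℝ) * (star x ⬝ᵥ (Q t *ᵥ x)).re) ∧
    ∃ V : ℝ → (Fin n → ℂ) → ℝ, IsStorage T A B C D V :=
  KYP_implies_passive_general T hTconn A B C D Q Q' hQpsd hQ' hQac hKYP
end
end

section
/- Nonnegative supply plus complete reachability implies passivity: if the LTV system has nonnegative supply and is completely reachable, then it is passive, i.e. it admits a storage function. -/
open MeasureTheory Matrix Set
open scoped ENNReal ComplexOrder

noncomputable section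

attribute [local instance] Matrix.normedAddCommGroup Matrix.normedSpace

variable {n m : ℕ}

/-!
The candidate storage function is Willems' required supply: the infimum of the supply spent
along trajectories that steer the state from rest to `x₀` at time `t₀`. Nonnegative supply makes
it nonnegative, the zero trajectory makes it vanish at `x₀ = 0`, and complete reachability makes
the infimum range over a nonempty set. Concatenating a trajectory reaching `x(t₀)` with a given
solution on `[t₀, t₁]` yields a trajectory reaching `x(t₁)`, which is the dissipation inequality.
-/

def supply (u y : ℝ → Fin m → ℂ) (t : ℝ) : ℝ := (star (y t) ⬝ᵥ u t).re

def concatAt {α : Type*} (c : ℝ) (f g : ℝ → α) (t : ℝ) : α := if t < c then f t else g t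

section Concat

variable {α : Type*} {c t : ℝ} {f g : ℝ → α}

lemma concatAt_of_lt (h : t < c) : concatAt c f g t = f t := if_pos h

lemma concatAt_of_le (h : c ≤ t) : concatAt c f g t = g t := if_neg h.not_gt

lemma concatAt_eq_left_of_le (hfg : f c = g c) (h : t ≤ c) : concatAt c f g t = f t := by
  rcases h.lt_or_eq with h | rfl
  · exact concatAt_of_lt h
  · exact (concatAt_of_le le_rfl).trans hfg.symm

lemma supply_concatAt (u₁ u₂ y₁ y₂ : ℝ → Fin m → ℂ) :
    supply (concatAt c u₁ u₂) (concatAt c y₁ y₂) = concatAt c (supply u₁ y₁) (supply u₂ y₂) := by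
  funext t
  rcases lt_or_ge t c with h | h
  · simp only [supply, concatAt_of_lt h]
  · simp only [supply, concatAt_of_le h]

end Concat

section ConcatIntegral

variable {E : Type*} [NormedAddCommGroup E] {μ : Measure ℝ} {s : Set ℝ} {c : ℝ} {f g : ℝ → E}

lemma concatAt_eq_indicator_add_indicator :
    concatAt c f g = (Iio c).indicator f + (Ici c).indicator g := by
  funext t
  rcases lt_or_ge t c with h | h
  · simp [concatAt_of_lt h, h, h.not_ge]
  · simp [concatAt_of_le h, h, h.not_gt]

lemma MemLp.concatAt {p : ℝ≥0∞} (hf : MemLp f p μ) (hg : MemLp g p μ) :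
    MemLp (concatAt c f g) p μ := by
  rw [concatAt_eq_indicator_add_indicator]
  exact (hf.indicator measurableSet_Iio).add (hg.indicator measurableSet_Ici)

lemma IntegrableOn.concatAt (hf : IntegrableOn f s μ) (hg : IntegrableOn g s μ) :
    IntegrableOn (concatAt c f g) s μ := by
  rw [concatAt_eq_indicator_add_indicator]
  exact (hf.indicator measurableSet_Iio).add (hg.indicator measurableSet_Ici)

variable [NormedSpace ℝ E] {a b : ℝ}

lemma intervalIntegral_concatAt_of_le_left (ha : a ≤ c) (hb : b ≤ c) :
    ∫ r in a..b, concatAt c f g r = ∫ r in a..b, f r := by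
  have hne : ∀ᵐ r ∂(volume : Measure ℝ), r ≠ c := compl_mem_ae_iff.mpr (measure_singleton c)
  refine intervalIntegral.integral_congr_ae ?_
  filter_upwards [hne] with r hrc hr
  exact concatAt_of_lt ((hr.2.trans (max_le ha hb)).lt_of_ne hrc)

lemma intervalIntegral_concatAt_of_le_right (ha : c ≤ a) (hb : c ≤ b) :
    ∫ r in a..b, concatAt c f g r = ∫ r in a..b, g r :=
  intervalIntegral.integral_congr fun _ hr => concatAt_of_le ((le_min ha hb).trans hr.1)

lemma concatAt_sub_eq_intervalIntegral {T : Set ℝ} {x₁ x₂ f₁ f₂ : ℝ → E} (hc : c ∈ T)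
    (hf : ∀ a ∈ T, ∀ b ∈ T, IntervalIntegrable (concatAt c f₁ f₂) volume a b)
    (h₁ : ∀ s ∈ T, ∀ t ∈ T, x₁ t - x₁ s = ∫ r in s..t, f₁ r)
    (h₂ : ∀ s ∈ T, ∀ t ∈ T, x₂ t - x₂ s = ∫ r in s..t, f₂ r) (hx : x₁ c = x₂ c) :
    ∀ s ∈ T, ∀ t ∈ T,
      concatAt c x₁ x₂ t - concatAt c x₁ x₂ s = ∫ r in s..t, concatAt c f₁ f₂ r := by
  have from_c : ∀ t ∈ T, concatAt c x₁ x₂ t - x₂ c = ∫ r in c..t, concatAt c f₁ f₂ r := by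
    intro t ht
    rcases lt_or_ge t c with htc | htc
    · rw [concatAt_of_lt htc, intervalIntegral_concatAt_of_le_left le_rfl htc.le, ← hx]
      exact h₁ c hc t ht
    · rw [concatAt_of_le htc, intervalIntegral_concatAt_of_le_right le_rfl htc]
      exact h₂ c hc t ht
  intro s hs t ht
  rw [← sub_sub_sub_cancel_right _ _ (x₂ c), from_c t ht, from_c s hs]
  exact intervalIntegral.integral_interval_sub_left (hf c hc t ht) (hf c hc s hs)

end ConcatIntegral

lemma intervalIntegrable_of_forall_integrableOn_Icc {E : Type*} [NormedAddCommGroup E]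
    {T : Set ℝ} {f : ℝ → E} (h : ∀ a ∈ T, ∀ b ∈ T, IntegrableOn f (Icc a b))
    {a b : ℝ} (ha : a ∈ T) (hb : b ∈ T) : IntervalIntegrable f volume a b := by
  rcases le_total a b with hab | hab
  · exact (intervalIntegrable_iff_integrableOn_Icc_of_le hab).2 (h a ha b hb)
  · exact ((intervalIntegrable_iff_integrableOn_Icc_of_le hab).2 (h b hb a ha)).symm

lemma integrable_supply {μ : Measure ℝ} {u y : ℝ → Fin m → ℂ} (hu : MemLp u 2 μ)
    (hy : MemLp y 2 μ) : Integrable (supply u y) μ := by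
  have hcoord : ∀ i, Integrable (fun t => star (y t i) * u t i) μ := fun i =>
    (hy.eval i).star.integrable_mul (hu.eval i)
  refine (integrable_finsetSum Finset.univ fun i _ => hcoord i).re.congr ?_
  filter_upwards with t
  simp [supply, dotProduct]

lemma intervalIntegrable_supply {T : Set ℝ} {u y : ℝ → Fin m → ℂ} (hu : LocLp T 2 u)
    (hy : LocLp T 2 y) {a b : ℝ} (ha : a ∈ T) (hb : b ∈ T) :
    IntervalIntegrable (supply u y) volume a b :=
  intervalIntegrable_of_forall_integrableOn_Icc
    (fun a ha b hb => integrable_supply (hu a ha b hb) (hy a ha b hb)) ha hb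

section Solutions

variable {T : Set ℝ} {A : ℝ → Matrix (Fin n) (Fin n) ℂ} {B : ℝ → Matrix (Fin n) (Fin m) ℂ}
  {C : ℝ → Matrix (Fin m) (Fin n) ℂ} {D : ℝ → Matrix (Fin m) (Fin m) ℂ}

lemma isSolution_zero : IsSolution T A B C D 0 0 0 := by
  refine ⟨fun _ _ _ _ => MemLp.zero, fun _ _ _ _ => MemLp.zero, ?_, ?_, ?_⟩
  · intro _ _ _ _
    simp
  · simp
  · filter_upwards
    simp

lemma isSolution_concatAt {x₁ x₂ : ℝ → Fin n → ℂ} {u₁ y₁ u₂ y₂ : ℝ → Fin m → ℂ} {c : ℝ}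
    (hc : c ∈ T) (h₁ : IsSolution T A B C D x₁ u₁ y₁) (h₂ : IsSolution T A B C D x₂ u₂ y₂)
    (hx : x₁ c = x₂ c) :
    IsSolution T A B C D (concatAt c x₁ x₂) (concatAt c u₁ u₂) (concatAt c y₁ y₂) := by
  obtain ⟨hu₁, hy₁, hf₁, hx₁, hout₁⟩ := h₁
  obtain ⟨hu₂, hy₂, hf₂, hx₂, hout₂⟩ := h₂
  have hrhs : (fun r => A r *ᵥ concatAt c x₁ x₂ r + B r *ᵥ concatAt c u₁ u₂ r) =
      concatAt c (fun r => A r *ᵥ x₁ r + B r *ᵥ u₁ r) (fun r => A r *ᵥ x₂ r + B r *ᵥ u₂ r) := by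
    funext r
    unfold concatAt
    split_ifs <;> rfl
  have hf : ∀ a ∈ T, ∀ b ∈ T, IntegrableOn (concatAt c (fun r => A r *ᵥ x₁ r + B r *ᵥ u₁ r)
      (fun r => A r *ᵥ x₂ r + B r *ᵥ u₂ r)) (Icc a b) :=
    fun a ha b hb => IntegrableOn.concatAt (hf₁ a ha b hb) (hf₂ a ha b hb)
  refine ⟨fun a ha b hb => MemLp.concatAt (hu₁ a ha b hb) (hu₂ a ha b hb),
    fun a ha b hb => MemLp.concatAt (hy₁ a ha b hb) (hy₂ a ha b hb), hrhs ▸ hf, ?_, ?_⟩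
  · rw [hrhs]
    exact concatAt_sub_eq_intervalIntegral hc
      (fun a ha b hb => intervalIntegrable_of_forall_integrableOn_Icc hf ha hb) hx₁ hx₂ hx
  · filter_upwards [hout₁, hout₂] with t ht₁ ht₂ ht
    unfold concatAt
    split_ifs
    exacts [ht₁ ht, ht₂ ht]

variable (T A B C D)

def HasNonnegSupply : Prop :=
  ∀ t₀ ∈ T, ∀ t₁ ∈ T, t₀ ≤ t₁ → ∀ (x : ℝ → Fin n → ℂ) (u y : ℝ → Fin m → ℂ),
    IsSolution T A B C D x u y → x t₀ = 0 → 0 ≤ ∫ t in t₀..t₁, supply u y t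

def IsReachable (t₀ : ℝ) (x₀ : Fin n → ℂ) : Prop :=
  ∃ s ∈ T, s ≤ t₀ ∧ ∃ (x : ℝ → Fin n → ℂ) (u y : ℝ → Fin m → ℂ),
    IsSolution T A B C D x u y ∧ x s = 0 ∧ x t₀ = x₀

def reachingSupplies (t₀ : ℝ) (x₀ : Fin n → ℂ) : Set ℝ :=
  {r | ∃ s ∈ T, s ≤ t₀ ∧ ∃ (x : ℝ → Fin n → ℂ) (u y : ℝ → Fin m → ℂ),
    IsSolution T A B C D x u y ∧ x s = 0 ∧ x t₀ = x₀ ∧ r = ∫ t in s..t₀, supply u y t}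

def requiredSupply (t₀ : ℝ) (x₀ : Fin n → ℂ) : ℝ := sInf (reachingSupplies T A B C D t₀ x₀)

variable {T A B C D} {t₀ t₁ : ℝ} {x₀ : Fin n → ℂ}

lemma IsReachable.reachingSupplies_nonempty (h : IsReachable T A B C D t₀ x₀) :
    (reachingSupplies T A B C D t₀ x₀).Nonempty :=
  let ⟨s, hs, hst, x, u, y, hsol, h0, hx⟩ := h
  ⟨_, s, hs, hst, x, u, y, hsol, h0, hx, rfl⟩

lemma HasNonnegSupply.nonneg_of_mem_reachingSupplies (hNN : HasNonnegSupply T A B C D)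
    (ht₀ : t₀ ∈ T) {r : ℝ} (hr : r ∈ reachingSupplies T A B C D t₀ x₀) : 0 ≤ r := by
  obtain ⟨s, hs, hst, x, u, y, hsol, h0, -, rfl⟩ := hr
  exact hNN s hs t₀ ht₀ hst x u y hsol h0

lemma HasNonnegSupply.bddBelow_reachingSupplies (hNN : HasNonnegSupply T A B C D)
    (ht₀ : t₀ ∈ T) : BddBelow (reachingSupplies T A B C D t₀ x₀) :=
  ⟨0, fun _ => hNN.nonneg_of_mem_reachingSupplies ht₀⟩

lemma HasNonnegSupply.requiredSupply_nonneg (hNN : HasNonnegSupply T A B C D) (ht₀ : t₀ ∈ T) :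
    0 ≤ requiredSupply T A B C D t₀ x₀ :=
  Real.sInf_nonneg fun _ => hNN.nonneg_of_mem_reachingSupplies ht₀

lemma HasNonnegSupply.requiredSupply_zero (hNN : HasNonnegSupply T A B C D) (ht₀ : t₀ ∈ T) :
    requiredSupply T A B C D t₀ 0 = 0 := by
  have hzero : (0 : ℝ) ∈ reachingSupplies T A B C D t₀ 0 :=
    ⟨t₀, ht₀, le_rfl, 0, 0, 0, isSolution_zero, rfl, rfl, intervalIntegral.integral_same.symm⟩
  exact (csInf_le (hNN.bddBelow_reachingSupplies ht₀) hzero).antisymm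
    (hNN.requiredSupply_nonneg ht₀)

lemma add_mem_reachingSupplies {x : ℝ → Fin n → ℂ} {u y : ℝ → Fin m → ℂ}
    (hsol : IsSolution T A B C D x u y) (ht₀ : t₀ ∈ T) (ht₁ : t₁ ∈ T) (hle : t₀ ≤ t₁) {r : ℝ}
    (hr : r ∈ reachingSupplies T A B C D t₀ (x t₀)) :
    r + ∫ t in t₀..t₁, supply u y t ∈ reachingSupplies T A B C D t₁ (x t₁) := by
  obtain ⟨s, hs, hst, x', u', y', hsol', h0, hx', rfl⟩ := hr
  have hcat := isSolution_concatAt ht₀ hsol' hsol hx'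
  refine ⟨s, hs, hst.trans hle, _, _, _, hcat, (concatAt_eq_left_of_le hx' hst).trans h0,
    concatAt_of_le hle, ?_⟩
  rw [← intervalIntegral.integral_add_adjacent_intervals
      (intervalIntegrable_supply hcat.1 hcat.2.1 hs ht₀)
      (intervalIntegrable_supply hcat.1 hcat.2.1 ht₀ ht₁), supply_concatAt,
    intervalIntegral_concatAt_of_le_left hst le_rfl,
    intervalIntegral_concatAt_of_le_right le_rfl hle]

lemma HasNonnegSupply.requiredSupply_le_add (hNN : HasNonnegSupply T A B C D)
    {x : ℝ → Fin n → ℂ} {u y : ℝ → Fin m → ℂ} (hsol : IsSolution T A B C D x u y)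
    (hreach : IsReachable T A B C D t₀ (x t₀)) (ht₀ : t₀ ∈ T) (ht₁ : t₁ ∈ T) (hle : t₀ ≤ t₁) :
    requiredSupply T A B C D t₁ (x t₁) ≤
      requiredSupply T A B C D t₀ (x t₀) + ∫ t in t₀..t₁, supply u y t := by
  rw [← sub_le_iff_le_add]
  refine le_csInf hreach.reachingSupplies_nonempty fun r hr => ?_
  rw [sub_le_iff_le_add]
  exact csInf_le (hNN.bddBelow_reachingSupplies ht₁) (add_mem_reachingSupplies hsol ht₀ ht₁ hle hr)

end Solutions

theorem nonnegSupply_completelyReachable_implies_passive_general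
    (T : Set ℝ)
    (A : ℝ → Matrix (Fin n) (Fin n) ℂ) (B : ℝ → Matrix (Fin n) (Fin m) ℂ)
    (C : ℝ → Matrix (Fin m) (Fin n) ℂ) (D : ℝ → Matrix (Fin m) (Fin m) ℂ)
    (hNN : ∀ t₀ ∈ T, ∀ t₁ ∈ T, t₀ ≤ t₁ →
      ∀ (x : ℝ → Fin n → ℂ) (u y : ℝ → Fin m → ℂ),
        IsSolution T A B C D x u y → x t₀ = 0 →
          0 ≤ ∫ t in t₀..t₁, (star (y t) ⬝ᵥ u t).re)
    (hreach : ∀ t₀ ∈ T, ∀ x₀ : Fin n → ℂ, ∃ tm1 ∈ T, tm1 ≤ t₀ ∧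
      ∃ (x : ℝ → Fin n → ℂ) (u y : ℝ → Fin m → ℂ),
        IsSolution T A B C D x u y ∧ x tm1 = 0 ∧ x t₀ = x₀) :
    ∃ V : ℝ → (Fin n → ℂ) → ℝ, IsStorage T A B C D V := by
  have hNN' : HasNonnegSupply T A B C D := hNN
  refine ⟨requiredSupply T A B C D, fun t ht _ => hNN'.requiredSupply_nonneg ht,
    fun t ht => hNN'.requiredSupply_zero ht, fun x u y hsol t₀ ht₀ t₁ ht₁ hle => ?_⟩
  rw [sub_le_iff_le_add']
  exact hNN'.requiredSupply_le_add hsol (hreach t₀ ht₀ (x t₀)) ht₀ ht₁ hle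

/-- **Nonnegative supply plus complete reachability implies passivity.** If the LTV
system has nonnegative supply and every state is reachable (from rest) at every time,
then the system admits a storage function. -/
theorem nonnegSupply_completelyReachable_implies_passive
    (T : Set ℝ) (hTopen : IsOpen T) (hTconn : T.OrdConnected)
    (A : ℝ → Matrix (Fin n) (Fin n) ℂ) (B : ℝ → Matrix (Fin n) (Fin m) ℂ)
    (C : ℝ → Matrix (Fin m) (Fin n) ℂ) (D : ℝ → Matrix (Fin m) (Fin m) ℂ)
    (hLTV : IsLTV T A B C D)
    (hNN : ∀ t₀ ∈ T, ∀ t₁ ∈ T, t₀ ≤ t₁ →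
      ∀ (x : ℝ → Fin n → ℂ) (u y : ℝ → Fin m → ℂ),
        IsSolution T A B C D x u y → x t₀ = 0 →
          0 ≤ ∫ t in t₀..t₁, (star (y t) ⬝ᵥ u t).re)
    (hreach : ∀ t₀ ∈ T, ∀ x₀ : Fin n → ℂ, ∃ tm1 ∈ T, tm1 ≤ t₀ ∧
      ∃ (x : ℝ → Fin n → ℂ) (u y : ℝ → Fin m → ℂ),
        IsSolution T A B C D x u y ∧ x tm1 = 0 ∧ x t₀ = x₀) :
    ∃ V : ℝ → (Fin n → ℂ) → ℝ, IsStorage T A B C D V :=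
  nonnegSupply_completelyReachable_implies_passive_general T A B C D hNN hreach
end
end
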